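/- A finite simple graph G satisfies μ(G) = 1 (G is almost equimatchable) if and only if both of the following hold: (i) G contains a maximal matching with an augmenting P4, and (ii) every two maximal matchings of G with an augmenting P4 have the same size. -/

import Mathlib

open SimpleGraph

variable {V : Type*}

/-- `M` is a matching in `G`: a set of pairwise vertex-disjoint edges of `G`. -/
def IsMatchingIn (G : SimpleGraph V) (M : Finset (Sym2 V)) : Prop :=
  (∀ e ∈ M, e ∈ G.edgeSet) ∧
    ∀ e ∈ M, ∀ f ∈ M, e ≠ f → ∀ v : V, v ∈ e → v ∉ f

/-- `M` is a maximal matching in `G`: a matching not properly contained in another matching. -/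
def IsMaximalMatchingIn (G : SimpleGraph V) (M : Finset (Sym2 V)) : Prop :=
  IsMatchingIn G M ∧ ∀ M', IsMatchingIn G M' → M ⊆ M' → M' = M

/-- `M` saturates (covers) the vertex `v`. -/
def Sat (M : Finset (Sym2 V)) (v : V) : Prop := ∃ e ∈ M, v ∈ e

/-- The matching number `ν(G)`. -/
noncomputable def nuNum (G : SimpleGraph V) : ℕ :=
  sSup {n | ∃ M, IsMatchingIn G M ∧ M.card = n}

/-- The minimum maximal matching number `β(G)`. -/
noncomputable def betaNum (G : SimpleGraph V) : ℕ :=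
  sInf {n | ∃ M, IsMaximalMatchingIn G M ∧ M.card = n}

/-- The matching gap `μ(G) = ν(G) - β(G)`. -/
noncomputable def muGap (G : SimpleGraph V) : ℕ := nuNum G - betaNum G

/-- `M` has an augmenting `P₄`: a path `u w y v` on four distinct vertices with
`wy ∈ M` and `u`, `v` not saturated by `M`. -/
def HasAugP4 (G : SimpleGraph V) (M : Finset (Sym2 V)) : Prop :=
  ∃ u w y v : V, u ≠ w ∧ u ≠ y ∧ u ≠ v ∧ w ≠ y ∧ w ≠ v ∧ y ≠ v ∧
    G.Adj u w ∧ G.Adj w y ∧ G.Adj y v ∧ s(w, y) ∈ M ∧ ¬ Sat M u ∧ ¬ Sat M v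

/-!
Augmenting along a `P₄` `u w y v` (replace `wy` by `uw` and `yv`) turns a maximal matching of
size `k` into a maximal matching of size `k + 1`, so a maximal matching with an augmenting `P₄`
has size in `[β, ν)`. Conversely, let `M` be maximal and smaller than some matching `N`. Pick
`u` saturated by `N` but not by `M`; its `N`-partner `w` is `M`-matched to some `y`, and swapping
`wy` for `uw` keeps the size and shrinks `N \ M`. Either the swapped matching is again maximal
and we recurse, or some edge is left free by it; that edge must end at `y`, which exhibits an
augmenting `P₄` `u w y v` of `M`. Together, the sizes of maximal matchings with an augmenting
`P₄` are exactly `β, …, ν - 1`, and (i) and (ii) say that this range is a single value.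
-/

section Matching

variable {G : SimpleGraph V} {M N : Finset (Sym2 V)} {u v w x y : V}

lemma IsMatchingIn.subset (hM : IsMatchingIn G M) (h : N ⊆ M) : IsMatchingIn G N :=
  ⟨fun e he => hM.1 e (h he), fun e he f hf => hM.2 e (h he) f (h hf)⟩

lemma sat_insert_iff [DecidableEq V] :
    Sat (insert s(u, w) M) x ↔ x = u ∨ x = w ∨ Sat M x := by
  simp [Sat, or_assoc]

lemma sat_erase_iff [DecidableEq V] (hM : IsMatchingIn G M) (h : s(w, y) ∈ M) :
    Sat (M.erase s(w, y)) x ↔ Sat M x ∧ x ≠ w ∧ x ≠ y := by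
  constructor
  · rintro ⟨e, he', hxe⟩
    obtain ⟨hne, he⟩ := Finset.mem_erase.mp he'
    refine ⟨⟨e, he, hxe⟩, ?_, ?_⟩ <;> rintro rfl <;> exact hM.2 e he _ h hne _ hxe (by simp)
  · rintro ⟨⟨e, he, hxe⟩, hxw, hxy⟩
    refine ⟨e, Finset.mem_erase.mpr ⟨?_, he⟩, hxe⟩
    rintro rfl
    exact (Sym2.mem_iff.mp hxe).elim hxw hxy

lemma IsMatchingIn.insert [DecidableEq V] (hM : IsMatchingIn G M) (huw : G.Adj u w)
    (hu : ¬ Sat M u) (hw : ¬ Sat M w) : IsMatchingIn G (insert s(u, w) M) := by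
  have hfree : ∀ x ∈ s(u, w), ∀ f ∈ M, x ∉ f := by
    rintro x hx f hf hxf
    rcases Sym2.mem_iff.mp hx with rfl | rfl
    exacts [hu ⟨f, hf, hxf⟩, hw ⟨f, hf, hxf⟩]
  refine ⟨fun e he => ?_, fun e he f hf hne x hxe => ?_⟩
  · rcases Finset.mem_insert.mp he with rfl | he
    exacts [huw, hM.1 e he]
  · rcases Finset.mem_insert.mp he with rfl | he <;> rcases Finset.mem_insert.mp hf with rfl | hf
    · exact absurd rfl hne
    · exact hfree x hxe f hf
    · exact fun hxf => hfree x hxf e he hxe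
    · exact hM.2 e he f hf hne x hxe

lemma isMaximalMatchingIn_iff (hM : IsMatchingIn G M) :
    IsMaximalMatchingIn G M ↔ ∀ a b, G.Adj a b → Sat M a ∨ Sat M b := by
  classical
  refine ⟨fun hmax a b hab => ?_, fun h => ⟨hM, fun M' hM' hsub => ?_⟩⟩
  · by_contra! hfree
    have hins := hmax.2 _ (hM.insert hab hfree.1 hfree.2) (Finset.subset_insert _ _)
    exact hfree.1 ⟨s(a, b), hins ▸ Finset.mem_insert_self _ _, by simp⟩
  · refine Finset.Subset.antisymm (fun e he => ?_) hsub
    by_contra heM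
    induction e using Sym2.ind with
    | h a b =>
      have hne : ∀ f ∈ M, s(a, b) ≠ f := fun f hf hf' => heM (hf' ▸ hf)
      rcases h a b (hM'.1 _ he) with ⟨f, hf, haf⟩ | ⟨f, hf, hbf⟩
      · exact hM'.2 _ he f (hsub hf) (hne f hf) a (by simp) haf
      · exact hM'.2 _ he f (hsub hf) (hne f hf) b (by simp) hbf

lemma IsMaximalMatchingIn.of_sat_imp (hM : IsMaximalMatchingIn G M) (hN : IsMatchingIn G N)
    (hsat : ∀ x, Sat M x → Sat N x) : IsMaximalMatchingIn G N :=
  (isMaximalMatchingIn_iff hN).mpr fun a b hab =>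
    ((isMaximalMatchingIn_iff hM.1).mp hM a b hab).imp (hsat a) (hsat b)

def matchedVerts [DecidableEq V] (M : Finset (Sym2 V)) : Finset V :=
  M.biUnion Sym2.toFinset

lemma mem_matchedVerts [DecidableEq V] : x ∈ matchedVerts M ↔ Sat M x := by
  simp [matchedVerts, Sat]

lemma IsMatchingIn.card_matchedVerts [DecidableEq V] (hM : IsMatchingIn G M) :
    (matchedVerts M).card = 2 * M.card := by
  rw [matchedVerts, Finset.card_biUnion, Finset.sum_const_nat, mul_comm]
  · exact fun e he => Sym2.card_toFinset_of_not_isDiag e (G.not_isDiag_of_mem_edgeSet (hM.1 e he))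
  · intro e he f hf hne
    simp only [Function.onFun, Finset.disjoint_left, Sym2.mem_toFinset]
    exact fun x hxe => hM.2 e he f hf hne x hxe

lemma exists_sat_not_sat_of_card_lt (hM : IsMatchingIn G M) (hN : IsMatchingIn G N)
    (h : M.card < N.card) : ∃ x, Sat N x ∧ ¬ Sat M x := by
  classical
  obtain ⟨x, hxN, hxM⟩ := Finset.exists_mem_notMem_of_card_lt_card
    (s := matchedVerts M) (t := matchedVerts N)
    (by rw [hM.card_matchedVerts, hN.card_matchedVerts]; omega)
  exact ⟨x, mem_matchedVerts.mp hxN, mt mem_matchedVerts.mpr hxM⟩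

lemma hasAugP4_of_adj (hM : IsMatchingIn G M) (hwy : s(w, y) ∈ M) (huw : G.Adj u w)
    (hyv : G.Adj y v) (hu : ¬ Sat M u) (hv : ¬ Sat M v) (huv : u ≠ v) : HasAugP4 G M := by
  have hw : Sat M w := ⟨_, hwy, by simp⟩
  have hy : Sat M y := ⟨_, hwy, by simp⟩
  refine ⟨u, w, y, v, huw.ne, ?_, huv, (hM.1 _ hwy).ne, ?_, hyv.ne, huw, hM.1 _ hwy, hyv, hwy,
    hu, hv⟩
  · rintro rfl; exact hu hy
  · rintro rfl; exact hv hw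

end Matching

section Swap

variable [DecidableEq V] {G : SimpleGraph V} {M N : Finset (Sym2 V)} {u w x y : V}

def swapEdge (M : Finset (Sym2 V)) (u w y : V) : Finset (Sym2 V) :=
  insert s(u, w) (M.erase s(w, y))

lemma sat_swapEdge_iff (hM : IsMatchingIn G M) (hwy : s(w, y) ∈ M) :
    Sat (swapEdge M u w y) x ↔ x = u ∨ x = w ∨ (Sat M x ∧ x ≠ y) := by
  rw [swapEdge, sat_insert_iff, sat_erase_iff hM hwy]
  tauto

lemma IsMatchingIn.swapEdge (hM : IsMatchingIn G M) (hwy : s(w, y) ∈ M) (huw : G.Adj u w)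
    (hu : ¬ Sat M u) : IsMatchingIn G (swapEdge M u w y) :=
  (hM.subset (Finset.erase_subset _ _)).insert huw (fun h => hu ((sat_erase_iff hM hwy).mp h).1)
    (fun h => ((sat_erase_iff hM hwy).mp h).2.1 rfl)

lemma card_swapEdge (hwy : s(w, y) ∈ M) (hu : ¬ Sat M u) :
    (swapEdge M u w y).card = M.card := by
  have huw : s(u, w) ∉ M.erase s(w, y) := fun h => hu ⟨_, Finset.mem_of_mem_erase h, by simp⟩
  rw [swapEdge, Finset.card_insert_of_notMem huw, Finset.card_erase_add_one hwy]

end Swap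

variable {G : SimpleGraph V} {M N : Finset (Sym2 V)}

lemma IsMaximalMatchingIn.exists_card_succ (hM : IsMaximalMatchingIn G M) (h4 : HasAugP4 G M) :
    ∃ N, IsMaximalMatchingIn G N ∧ N.card = M.card + 1 := by
  classical
  obtain ⟨u, w, y, v, -, huy, huv, hwy, hwv, -, huw, -, hyv, hwyM, hu, hv⟩ := h4
  have hsat := fun x => sat_swapEdge_iff (u := u) (x := x) hM.1 hwyM
  have hy : ¬ Sat (swapEdge M u w y) y := by simp [hsat, Ne.symm huy, Ne.symm hwy]
  have hv' : ¬ Sat (swapEdge M u w y) v := by simp [hsat, Ne.symm huv, Ne.symm hwv, hv]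
  have hN := (hM.1.swapEdge hwyM huw hu).insert hyv hy hv'
  refine ⟨_, hM.of_sat_imp hN fun x hx => ?_, ?_⟩
  · by_cases hxy : x = y <;> simp [sat_insert_iff, hsat, hx, hxy]
  · rw [Finset.card_insert_of_notMem (fun h => hy ⟨_, h, by simp⟩), card_swapEdge hwyM hu]

theorem IsMaximalMatchingIn.exists_hasAugP4_of_card_lt [DecidableEq V] {M N : Finset (Sym2 V)}
    (hM : IsMaximalMatchingIn G M) (hN : IsMatchingIn G N) (hlt : M.card < N.card) :
    ∃ M₀, IsMaximalMatchingIn G M₀ ∧ M₀.card = M.card ∧ HasAugP4 G M₀ := by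
  obtain ⟨u, ⟨e, heN, hue⟩, hu⟩ := exists_sat_not_sat_of_card_lt hM.1 hN hlt
  obtain ⟨w, rfl⟩ : ∃ w, e = s(u, w) := ⟨_, (Sym2.other_spec hue).symm⟩
  have huw : G.Adj u w := hN.1 _ heN
  obtain ⟨f, hfM, hwf⟩ := ((isMaximalMatchingIn_iff hM.1).mp hM u w huw).resolve_left hu
  obtain ⟨y, rfl⟩ : ∃ y, f = s(w, y) := ⟨_, (Sym2.other_spec hwf).symm⟩
  have hsat := fun x => sat_swapEdge_iff (u := u) (x := x) hM.1 hfM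
  have hM' := hM.1.swapEdge hfM huw hu
  by_cases hmax : IsMaximalMatchingIn G (swapEdge M u w y)
  · have hsub : N \ swapEdge M u w y ⊆ (N \ M).erase s(u, w) := by
      intro f hf
      obtain ⟨hfN, hfM'⟩ := Finset.mem_sdiff.mp hf
      simp only [swapEdge, Finset.mem_insert, Finset.mem_erase, not_or, not_and_or, not_not]
        at hfM'
      refine Finset.mem_erase.mpr ⟨hfM'.1, Finset.mem_sdiff.mpr ⟨hfN, ?_⟩⟩
      rcases hfM'.2 with rfl | h
      · exact fun _ => hN.2 _ hfN _ heN hfM'.1 w (by simp) (by simp)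
      · exact h
    have hdec : (N \ swapEdge M u w y).card < (N \ M).card :=
      (Finset.card_le_card hsub).trans_lt (Finset.card_erase_lt_of_mem
        (Finset.mem_sdiff.mpr ⟨heN, fun h => hu ⟨_, h, by simp⟩⟩))
    obtain ⟨M₀, h₀, hc₀, h4₀⟩ :=
      hmax.exists_hasAugP4_of_card_lt hN (by rwa [card_swapEdge hfM hu])
    exact ⟨M₀, h₀, hc₀.trans (card_swapEdge hfM hu), h4₀⟩
  · -- the swap unsaturates only `y`, so an edge it leaves free is `yv` with `v` free for `M`
    have hP4 : ∀ a v, G.Adj a v → ¬ Sat (swapEdge M u w y) a → ¬ Sat (swapEdge M u w y) v →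
        Sat M a → HasAugP4 G M := by
      intro a v hav ha hv haM
      rw [hsat, not_or, not_or, not_and_not_right] at ha hv
      obtain rfl := ha.2.2 haM
      have hvM : ¬ Sat M v := fun h => hav.ne (hv.2.2 h).symm
      exact hasAugP4_of_adj hM.1 hfM huw hav hu hvM (Ne.symm hv.1)
    obtain ⟨a, b, hab, ha, hb⟩ : ∃ a b, G.Adj a b ∧ ¬ Sat (swapEdge M u w y) a ∧
        ¬ Sat (swapEdge M u w y) b := by
      simpa [isMaximalMatchingIn_iff hM'] using hmax
    refine ⟨M, hM, rfl, ?_⟩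
    rcases (isMaximalMatchingIn_iff hM.1).mp hM a b hab with haM | hbM
    exacts [hP4 a b hab ha hb haM, hP4 b a hab.symm hb ha hbM]
termination_by (N \ M).card
decreasing_by exact hdec

lemma IsMaximalMatchingIn.betaNum_le_card (hM : IsMaximalMatchingIn G M) : betaNum G ≤ M.card :=
  Nat.sInf_le ⟨M, hM, rfl⟩

section Numbers

variable [Fintype V] (G : SimpleGraph V)

lemma bddAbove_matching_cards : BddAbove {n | ∃ M, IsMatchingIn G M ∧ M.card = n} := by
  classical
  exact ⟨Fintype.card (Sym2 V), by rintro _ ⟨M, -, rfl⟩; exact Finset.card_le_univ M⟩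

lemma IsMatchingIn.card_le_nuNum {M : Finset (Sym2 V)} (hM : IsMatchingIn G M) :
    M.card ≤ nuNum G :=
  le_csSup (bddAbove_matching_cards G) ⟨M, hM, rfl⟩

lemma exists_isMatchingIn_card_eq_nuNum : ∃ M, IsMatchingIn G M ∧ M.card = nuNum G :=
  Nat.sSup_mem (s := {n | ∃ M, IsMatchingIn G M ∧ M.card = n}) ⟨0, ∅, ⟨by simp, by simp⟩, rfl⟩
    (bddAbove_matching_cards G)

lemma exists_isMaximalMatchingIn_card_eq_betaNum :
    ∃ M, IsMaximalMatchingIn G M ∧ M.card = betaNum G := by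
  obtain ⟨M, hM, hc⟩ := exists_isMatchingIn_card_eq_nuNum G
  have hmax : IsMaximalMatchingIn G M := ⟨hM, fun M' hM' hsub =>
    (Finset.eq_of_subset_of_card_le hsub (hc ▸ hM'.card_le_nuNum G)).symm⟩
  exact Nat.sInf_mem (s := {n | ∃ M, IsMaximalMatchingIn G M ∧ M.card = n})
    ⟨M.card, M, hmax, rfl⟩

lemma exists_isMaximalMatchingIn_card_eq {k : ℕ} (hβ : betaNum G ≤ k)
    (hν : k ≤ nuNum G) :
    ∃ M, IsMaximalMatchingIn G M ∧ M.card = k := by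
  classical
  induction k, hβ using Nat.le_induction with
  | base => exact exists_isMaximalMatchingIn_card_eq_betaNum G
  | succ k _ ih =>
    obtain ⟨M, hM, rfl⟩ := ih (by omega)
    obtain ⟨N, hN, hNc⟩ := exists_isMatchingIn_card_eq_nuNum G
    obtain ⟨M₀, hM₀, hc₀, h4₀⟩ := hM.exists_hasAugP4_of_card_lt hN (by omega)
    obtain ⟨M₁, hM₁, hc₁⟩ := hM₀.exists_card_succ h4₀
    exact ⟨M₁, hM₁, by omega⟩

theorem exists_hasAugP4_card_eq_iff (k : ℕ) :
    (∃ M, IsMaximalMatchingIn G M ∧ HasAugP4 G M ∧ M.card = k) ↔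
      betaNum G ≤ k ∧ k < nuNum G := by
  classical
  constructor
  · rintro ⟨M, hM, h4, rfl⟩
    obtain ⟨N, hN, hNc⟩ := hM.exists_card_succ h4
    exact ⟨hM.betaNum_le_card, by have := hN.1.card_le_nuNum; omega⟩
  · rintro ⟨hβ, hν⟩
    obtain ⟨M, hM, rfl⟩ := exists_isMaximalMatchingIn_card_eq G hβ hν.le
    obtain ⟨N, hN, hNc⟩ := exists_isMatchingIn_card_eq_nuNum G
    obtain ⟨M₀, hM₀, hc₀, h4₀⟩ := hM.exists_hasAugP4_of_card_lt hN (by omega)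
    exact ⟨M₀, hM₀, h4₀, hc₀⟩

end Numbers

theorem stmt_6 {V : Type*} [Fintype V] (G : SimpleGraph V) :
    muGap G = 1 ↔
      (∃ M : Finset (Sym2 V), IsMaximalMatchingIn G M ∧ HasAugP4 G M) ∧
      (∀ M M' : Finset (Sym2 V), IsMaximalMatchingIn G M → IsMaximalMatchingIn G M' →
        HasAugP4 G M → HasAugP4 G M' → M.card = M'.card) := by
  have hsizes := exists_hasAugP4_card_eq_iff G
  rw [muGap]
  constructor
  · intro hμ
    obtain ⟨M, hM, h4, -⟩ := (hsizes (betaNum G)).2 ⟨le_rfl, by omega⟩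
    refine ⟨⟨M, hM, h4⟩, fun M M' hM hM' h4 h4' => ?_⟩
    have hM_range := (hsizes M.card).1 ⟨M, hM, h4, rfl⟩
    have hM'_range := (hsizes M'.card).1 ⟨M', hM', h4', rfl⟩
    omega
  · rintro ⟨⟨M, hM, h4⟩, hsame⟩
    have hM_range := (hsizes M.card).1 ⟨M, hM, h4, rfl⟩
    by_contra hμ
    obtain ⟨M₁, hM₁, h4₁, hc₁⟩ := (hsizes (betaNum G)).2 ⟨le_rfl, by omega⟩
    obtain ⟨M₂, hM₂, h4₂, hc₂⟩ := (hsizes (betaNum G + 1)).2 ⟨by omega, by omega⟩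
    have hcard := hsame M₁ M₂ hM₁ hM₂ h4₁ h4₂
    omega
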